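/- arXiv:1310.6021 — 6 statements merged into one kernel-verified Lean document; each statement's English description precedes it below -/
import Mathlib

section
/- Let (A, Ω) be an algebra and Θ a congruence on the extended power algebra (P^{<ω}_{>0}(A), Ω, ∪) of finite nonempty subsets with complex operations and union. Then for each n-ary operation ω ∈ Ω with n > 0, the closure operator C_Θ satisfies ω(C_Θ(T₁), …, C_Θ(Tₙ)) ⊆ C_Θ(ω(T₁, …, Tₙ)) for all finite nonempty subsets T₁, …, Tₙ of A. -/
/-- `T` is a finite nonempty subset. -/
def finNE {A : Type*} (T : Set A) : Prop := T.Finite ∧ T.Nonempty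

/-- The closure operator induced by an equivalence `Θ` on finite nonempty subsets. -/
def CTheta {A : Type*} (Θ : Set A → Set A → Prop) (T : Set A) : Set A :=
  {a : A | ∃ U : Set A, U.Finite ∧ U.Nonempty ∧ U ⊆ T ∧ Θ (U ∪ {a}) U}

/-- The complex (power) operation on subsets induced by an `n`-ary operation `f`. -/
def setOp {A : Type*} {n : ℕ} (f : (Fin n → A) → A) (X : Fin n → Set A) : Set A :=
  {b : A | ∃ x : Fin n → A, (∀ k, x k ∈ X k) ∧ f x = b}

/-- `Θ` is a congruence on the extended power algebra `(P^{<ω}_{>0}(A), Ω, ∪)`: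
an equivalence on finite nonempty subsets compatible with union and with all
complex operations. -/
def PowCong {A : Type*} {ι : Type*} (ar : ι → ℕ) (op : ∀ i, (Fin (ar i) → A) → A)
    (Θ : Set A → Set A → Prop) : Prop :=
  (∀ X : Set A, finNE X → Θ X X) ∧
  (∀ X Y : Set A, Θ X Y → Θ Y X) ∧
  (∀ X Y Z : Set A, Θ X Y → Θ Y Z → Θ X Z) ∧
  (∀ X Y X' Y' : Set A, finNE X → finNE Y → finNE X' → finNE Y' →
    Θ X X' → Θ Y Y' → Θ (X ∪ Y) (X' ∪ Y')) ∧
  (∀ i, ∀ X Y : Fin (ar i) → Set A, (∀ k, finNE (X k)) → (∀ k, finNE (Y k)) →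
    (∀ k, Θ (X k) (Y k)) → Θ (setOp (op i) X) (setOp (op i) Y))

lemma setOp_eq_image {A : Type*} {n : ℕ} (f : (Fin n → A) → A) (X : Fin n → Set A) :
    setOp f X = f '' (Set.pi Set.univ X) := by
  ext b
  simp [setOp, Set.pi, eq_comm]

lemma setOp_finNE {A : Type*} {n : ℕ} (f : (Fin n → A) → A) (X : Fin n → Set A)
    (hX : ∀ k, finNE (X k)) : finNE (setOp f X) := by
  rw [setOp_eq_image]
  constructor
  · exact Set.Finite.image _ (Set.Finite.pi (fun k => (hX k).1))
  · refine Set.Nonempty.image _ ?_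
    choose x hx using fun k => (hX k).2
    exact ⟨x, by simpa using hx⟩

lemma setOp_mono {A : Type*} {n : ℕ} (f : (Fin n → A) → A) {X Y : Fin n → Set A}
    (h : ∀ k, X k ⊆ Y k) : setOp f X ⊆ setOp f Y := by
  rintro b ⟨x, hx, rfl⟩
  exact ⟨x, fun k => h k (hx k), rfl⟩

/-- Lemma 3.3: if `Θ` is a congruence on the extended power algebra, then `C_Θ`
satisfies `ω(C_Θ(T₁), …, C_Θ(Tₙ)) ⊆ C_Θ(ω(T₁, …, Tₙ))` for every `n`-ary
operation `ω` with `n > 0` and all finite nonempty `T₁, …, Tₙ`. -/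
theorem stmt1 {A : Type*} {ι : Type*} (ar : ι → ℕ)
    (op : ∀ i, (Fin (ar i) → A) → A)
    (Θ : Set A → Set A → Prop) (hΘ : PowCong ar op Θ)
    (i : ι) (hi : 0 < ar i)
    (T : Fin (ar i) → Set A) (hT : ∀ k, finNE (T k)) :
    setOp (op i) (fun k => CTheta Θ (T k)) ⊆ CTheta Θ (setOp (op i) T) := by

  obtain ⟨hrefl, hsymm, htrans, hunion, hcomp⟩ := hΘ
  rintro b ⟨x, hx, rfl⟩
  choose U hUfin hUne hUsub hUΘ using hx
  set V : Set A := setOp (op i) U with hV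
  set W : Set A := setOp (op i) (fun k => U k ∪ {x k}) with hW
  have hUx : ∀ k, finNE (U k ∪ {x k}) := fun k =>
    ⟨(hUfin k).union (Set.finite_singleton _), ((hUne k).mono Set.subset_union_left)⟩
  have hUNE : ∀ k, finNE (U k) := fun k => ⟨hUfin k, hUne k⟩
  have hWV : Θ W V := hcomp i _ _ hUx hUNE hUΘ
  have hVfin : finNE V := setOp_finNE _ _ hUNE
  have hVsubW : V ⊆ W := setOp_mono _ (fun k => Set.subset_union_left)
  have hbW : op i x ∈ W := ⟨x, fun k => Set.mem_union_right _ rfl, rfl⟩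
  have hV'NE : finNE (V ∪ {op i x}) :=
    ⟨hVfin.1.union (Set.finite_singleton _), hVfin.2.mono Set.subset_union_left⟩
  have h1 : Θ ((V ∪ {op i x}) ∪ W) ((V ∪ {op i x}) ∪ V) :=
    hunion _ _ _ _ hV'NE ⟨(setOp_finNE _ _ hUx).1, ⟨_, hbW⟩⟩ hV'NE hVfin
      (hrefl _ hV'NE) hWV
  have e1 : (V ∪ {op i x}) ∪ W = W := by
    apply Set.union_eq_self_of_subset_left
    exact Set.union_subset hVsubW (by simpa using hbW)
  have e2 : (V ∪ {op i x}) ∪ V = V ∪ {op i x} := by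
    rw [Set.union_comm V, Set.union_assoc, Set.union_self, Set.union_comm]
  rw [e1, e2] at h1
  exact ⟨V, hVfin.1, hVfin.2, setOp_mono _ hUsub,
    htrans _ _ _ (hsymm _ _ h1) hWV⟩
end

section
/- Let (A, Ω) be an algebra and C an algebraic ∅-preserving closure operator on P(A) satisfying ω(C(A₁), …, C(Aₙ)) ⊆ C(ω(A₁, …, Aₙ)) for every nonconstant operation ω ∈ Ω. Then the relation Υ_C on finite nonempty subsets, defined by Q Υ_C R iff C(Q) = C(R), is a congruence on the extended power algebra (P^{<ω}_{>0}(A), Ω, ∪). -/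
/-- `C` belongs to `Clo(A)`: an algebraic `∅`-preserving closure operator on `P(A)`
satisfying `ω(C(T₁),…,C(Tₙ)) ⊆ C(ω(T₁,…,Tₙ))` for every nonconstant (positive arity)
operation `ω`. -/
def CloA {A : Type*} {ι : Type*} (ar : ι → ℕ) (op : ∀ i, (Fin (ar i) → A) → A)
    (C : Set A → Set A) : Prop :=
  C (∅ : Set A) = ∅ ∧
  (∀ T : Set A, T ⊆ C T) ∧
  (∀ T W : Set A, T ⊆ W → C T ⊆ C W) ∧
  (∀ T : Set A, C (C T) = C T) ∧
  (∀ B : Set A, C B = ⋃ F ∈ {F : Set A | F.Finite ∧ F ⊆ B}, C F) ∧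
  (∀ i, 0 < ar i → ∀ X : Fin (ar i) → Set A,
    setOp (op i) (fun k => C (X k)) ⊆ C (setOp (op i) X))

/-- Lemma 3.4: for `C ∈ Clo(A)`, the relation `Υ_C` (`Q Υ_C R ⟺ C(Q) = C(R)` on
finite nonempty subsets) is a congruence on the extended power algebra. -/
theorem stmt2 {A : Type*} {ι : Type*} (ar : ι → ℕ)
    (op : ∀ i, (Fin (ar i) → A) → A)
    (C : Set A → Set A) (hC : CloA ar op C) :
    PowCong ar op (fun Q R => finNE Q ∧ finNE R ∧ C Q = C R) := by
  obtain ⟨-, hext, hmono, hidem, -, hop⟩ := hC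
  have hCC : ∀ X Y : Set A, C X = C Y → C (X ∪ Y) = C X := by
    intro X Y h
    apply le_antisymm
    · have h1 : X ∪ Y ⊆ C X := by
        apply Set.union_subset (hext X)
        rw [h]; exact hext Y
      calc C (X ∪ Y) ⊆ C (C X) := hmono _ _ h1
        _ = C X := hidem X
    · exact hmono _ _ Set.subset_union_left
  refine ⟨fun X hX => ⟨hX, hX, rfl⟩,
    fun X Y ⟨h1, h2, h3⟩ => ⟨h2, h1, h3.symm⟩,
    fun X Y Z ⟨h1, h2, h3⟩ ⟨h4, h5, h6⟩ => ⟨h1, h5, h3.trans h6⟩,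
    ?_, ?_⟩
  · rintro X Y X' Y' hX hY hX' hY' ⟨-, -, e1⟩ ⟨-, -, e2⟩
    refine ⟨⟨hX.1.union hY.1, hX.2.mono Set.subset_union_left⟩,
      ⟨hX'.1.union hY'.1, hX'.2.mono Set.subset_union_left⟩, ?_⟩
    have key : ∀ P Q P' Q' : Set A, C P = C P' → C Q = C Q' →
        C (P ∪ Q) ⊆ C (P' ∪ Q') := by
      intro P Q P' Q' e1 e2
      have h1 : P ∪ Q ⊆ C (P' ∪ Q') := by
        apply Set.union_subset
        · calc P ⊆ C P := hext P
            _ = C P' := e1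
            _ ⊆ C (P' ∪ Q') := hmono _ _ Set.subset_union_left
        · calc Q ⊆ C Q := hext Q
            _ = C Q' := e2
            _ ⊆ C (P' ∪ Q') := hmono _ _ Set.subset_union_right
      calc C (P ∪ Q) ⊆ C (C (P' ∪ Q')) := hmono _ _ h1
        _ = C (P' ∪ Q') := hidem _
    exact le_antisymm (key _ _ _ _ e1 e2) (key _ _ _ _ e1.symm e2.symm)
  · intro i X Y hX hY hXY
    have hfin : ∀ Z : Fin (ar i) → Set A, (∀ k, finNE (Z k)) →
        finNE (setOp (op i) Z) := by
      intro Z hZ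
      have him : setOp (op i) Z = op i '' Set.pi Set.univ Z := by
        ext b
        constructor
        · rintro ⟨x, hx, rfl⟩; exact ⟨x, fun k _ => hx k, rfl⟩
        · rintro ⟨x, hx, rfl⟩; exact ⟨x, fun k => hx k trivial, rfl⟩
      constructor
      · rw [him]
        exact (Set.Finite.pi fun k => (hZ k).1).image _
      · choose x hx using fun k => (hZ k).2
        exact ⟨op i x, x, hx, rfl⟩
    refine ⟨hfin X hX, hfin Y hY, ?_⟩
    rcases Nat.eq_zero_or_pos (ar i) with h0 | hpos
    · have : setOp (op i) X = setOp (op i) Y := by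
        ext b
        simp only [setOp, Set.mem_setOf_eq]
        constructor <;> rintro ⟨x, hx, rfl⟩ <;>
          exact ⟨x, fun k => absurd k.isLt (by omega), rfl⟩
      rw [this]
    · have key : ∀ P Q : Fin (ar i) → Set A, (∀ k, C (P k) = C (Q k)) →
          C (setOp (op i) P) ⊆ C (setOp (op i) Q) := by
        intro P Q e
        have h1 : setOp (op i) P ⊆ C (setOp (op i) Q) := by
          intro b hb
          obtain ⟨x, hx, rfl⟩ := hb
          apply hop i hpos Q
          refine ⟨x, fun k => ?_, rfl⟩
          show x k ∈ C (Q k)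
          rw [← e k]; exact hext _ (hx k)
        calc C (setOp (op i) P) ⊆ C (C (setOp (op i) Q)) := hmono _ _ h1
          _ = C (setOp (op i) Q) := hidem _
      exact le_antisymm (key X Y fun k => (hXY k).2.2)
        (key Y X fun k => (hXY k).2.2.symm)
end

section
/- Let (A, Ω) be an algebra and Θ a congruence on the extended power algebra (P^{<ω}_{>0}(A), Ω, ∪). Then for finite nonempty subsets Q, R of A: Q ⊆ C_Θ(R) if and only if Q ∪ R Θ R. -/
/-- Lemma 3.5: for a congruence `Θ` on the extended power algebra and finite nonempty
`Q, R ⊆ A`: `Q ⊆ C_Θ(R)` iff `(Q ∪ R) Θ R`. -/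
theorem stmt3 {A : Type*} {ι : Type*} (ar : ι → ℕ)
    (op : ∀ i, (Fin (ar i) → A) → A)
    (Θ : Set A → Set A → Prop) (hΘ : PowCong ar op Θ)
    (Q R : Set A) (hQ : finNE Q) (hR : finNE R) :
    Q ⊆ CTheta Θ R ↔ Θ (Q ∪ R) R := by
  obtain ⟨hrefl, hsym, htrans, hunion, hops⟩ := hΘ
  have hRR : Θ R R := hrefl R hR
  -- key: if a ∈ CTheta Θ R then Θ ({a} ∪ R) R
  have key : ∀ a ∈ CTheta Θ R, Θ ({a} ∪ R) R := by
    intro a ha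
    obtain ⟨U, hUf, hUne, hUR, hU⟩ := ha
    have h1 : Θ ((U ∪ {a}) ∪ R) (U ∪ R) :=
      hunion _ _ _ _ ⟨hUf.union (Set.finite_singleton a), hUne.mono Set.subset_union_left⟩
        hR ⟨hUf, hUne⟩ hR hU hRR
    have e1 : (U ∪ {a}) ∪ R = {a} ∪ R := by
      rw [Set.union_assoc, Set.union_comm {a} R, ← Set.union_assoc,
        Set.union_eq_self_of_subset_left hUR, Set.union_comm]
    have e2 : U ∪ R = R := Set.union_eq_self_of_subset_left hUR
    rwa [e1, e2] at h1
  constructor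
  · intro hsub
    have main : ∀ Q' : Set A, Q'.Finite → Q' ⊆ CTheta Θ R → Θ (Q' ∪ R) R := by
      intro Q' hQ'f
      refine Set.Finite.induction_on (motive := fun s _ => s ⊆ CTheta Θ R → Θ (s ∪ R) R)
        Q' hQ'f (fun _ => by simpa using hRR) ?_
      intro a s ha hsf ih hins
      have hs : Θ (s ∪ R) R := ih (fun x hx => hins (Set.mem_insert_of_mem a hx))
      have haC : Θ ({a} ∪ R) R := key a (hins (Set.mem_insert a s))
      have h2 : Θ (({a} ∪ R) ∪ (s ∪ R)) (R ∪ R) :=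
        hunion _ _ _ _ ⟨(Set.finite_singleton a).union hR.1, hR.2.mono Set.subset_union_right⟩
          ⟨hsf.union hR.1, hR.2.mono Set.subset_union_right⟩ hR hR haC hs
      have e3 : ({a} ∪ R) ∪ (s ∪ R) = insert a s ∪ R := by
        rw [Set.insert_eq]; ext x; simp; tauto
      rw [e3, Set.union_self] at h2
      exact h2
    exact main Q hQ.1 hsub
  · intro h a haQ
    refine ⟨R, hR.1, hR.2, subset_rfl, ?_⟩
    have h1 : Θ ({a} ∪ (Q ∪ R)) ({a} ∪ R) :=
      hunion _ _ _ _ ⟨Set.finite_singleton a, Set.singleton_nonempty a⟩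
        ⟨hQ.1.union hR.1, hQ.2.mono Set.subset_union_left⟩
        ⟨Set.finite_singleton a, Set.singleton_nonempty a⟩ hR
        (hrefl _ ⟨Set.finite_singleton a, Set.singleton_nonempty a⟩) h
    have e : {a} ∪ (Q ∪ R) = Q ∪ R := by
      rw [← Set.union_assoc, Set.union_eq_self_of_subset_left (Set.singleton_subset_iff.2 haQ)]
    rw [e] at h1
    have : Θ ({a} ∪ R) R := htrans _ _ _ (hsym _ _ h1) h
    rwa [Set.union_comm] at this
end

section
/- Let (A, Ω) be an algebra. The maps Θ ↦ C_Θ and C ↦ Υ_C are mutually inverse bijections between the set of congruences on the extended power algebra (P^{<ω}_{>0}(A), Ω, ∪) and the set of algebraic ∅-preserving closure operators C on P(A) satisfying ω(C(T₁), …, C(Tₙ)) ⊆ C(ω(T₁, …, Tₙ)) for every nonconstant ω ∈ Ω. That is, Θ = Υ_{C_Θ} and C = C_{Υ_C}. -/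
/-- The relation `Υ_C` on finite nonempty subsets: `Q Υ_C R ⟺ C(Q) = C(R)`. -/
def Ups {A : Type*} (C : Set A → Set A) (Q R : Set A) : Prop :=
  finNE Q ∧ finNE R ∧ C Q = C R

section Aux

variable {A : Type*} {Θ : Set A → Set A → Prop}

lemma finNE_union {X Y : Set A} (hX : finNE X) (hY : finNE Y) : finNE (X ∪ Y) :=
  ⟨hX.1.union hY.1, hX.2.mono Set.subset_union_left⟩

lemma finNE_singleton (a : A) : finNE ({a} : Set A) :=
  ⟨Set.finite_singleton a, Set.singleton_nonempty a⟩

/-- Key lemma: if `a ∈ C_Θ(R)` with `R` finite nonempty, then `Θ (R ∪ {a}) R`. -/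
lemma CTheta_key
    (hrefl : ∀ X : Set A, finNE X → Θ X X)
    (hunion : ∀ X Y X' Y' : Set A, finNE X → finNE Y → finNE X' → finNE Y' →
      Θ X X' → Θ Y Y' → Θ (X ∪ Y) (X' ∪ Y'))
    {R : Set A} {a : A} (hR : finNE R) (ha : a ∈ CTheta Θ R) :
    Θ (R ∪ {a}) R := by
  obtain ⟨U, hUf, hUne, hUR, hΘ⟩ := ha
  have hU : finNE U := ⟨hUf, hUne⟩
  have h1 := hunion (U ∪ {a}) R U R (finNE_union hU (finNE_singleton a)) hR hU hR
    hΘ (hrefl R hR)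
  have e1 : U ∪ R = R := Set.union_eq_self_of_subset_left hUR
  rwa [Set.union_right_comm, e1] at h1

/-- If a finite nonempty `Q` is contained in `C_Θ(R)`, then `Θ (R ∪ Q) R`. -/
lemma CTheta_subset
    (hrefl : ∀ X : Set A, finNE X → Θ X X)
    (htrans : ∀ X Y Z : Set A, Θ X Y → Θ Y Z → Θ X Z)
    (hunion : ∀ X Y X' Y' : Set A, finNE X → finNE Y → finNE X' → finNE Y' →
      Θ X X' → Θ Y Y' → Θ (X ∪ Y) (X' ∪ Y'))
    {R Q : Set A} (hR : finNE R) (hQf : Q.Finite) :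
    Q.Nonempty → Q ⊆ CTheta Θ R → Θ (R ∪ Q) R := by
  refine Set.Finite.induction_on (motive := fun Q _ => Q.Nonempty → Q ⊆ CTheta Θ R → Θ (R ∪ Q) R) Q hQf (fun h => absurd rfl h.ne_empty) ?_
  intro a Q' haQ hQ'f ih _ hsub
  have ha : Θ (R ∪ {a}) R :=
    CTheta_key hrefl hunion hR (hsub (Set.mem_insert a Q'))
  rcases Q'.eq_empty_or_nonempty with h | h
  · subst h; simpa using ha
  · have hQ' : Θ (R ∪ Q') R := ih h (fun x hx => hsub (Set.mem_insert_of_mem a hx))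
    have h2 := hunion (R ∪ Q') (R ∪ {a}) R R
      (finNE_union hR ⟨hQ'f, h⟩) (finNE_union hR (finNE_singleton a)) hR hR hQ' ha
    have e : (R ∪ Q') ∪ (R ∪ {a}) = R ∪ insert a Q' := by
      ext x; simp [Set.mem_insert_iff]; tauto
    rwa [e, Set.union_self] at h2

end Aux

/-- Theorem 3.6: the maps `Θ ↦ C_Θ` and `C ↦ Υ_C` are mutually inverse between
congruences of the extended power algebra and `Clo(A)`:
`Θ = Υ_{C_Θ}` and `C = C_{Υ_C}`. -/
theorem stmt4 {A : Type*} {ι : Type*} (ar : ι → ℕ)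
    (op : ∀ i, (Fin (ar i) → A) → A) :
    (∀ Θ : Set A → Set A → Prop, PowCong ar op Θ →
      ∀ Q R : Set A, finNE Q → finNE R →
        (Θ Q R ↔ Ups (CTheta Θ) Q R)) ∧
    (∀ C : Set A → Set A, CloA ar op C →
      ∀ T : Set A, CTheta (Ups C) T = C T) := by
  constructor
  · rintro Θ ⟨hrefl, hsymm, htrans, hunion, -⟩ Q R hQ hR
    -- auxiliary: Θ Q R implies C_Θ Q ⊆ C_Θ R
    have sub : ∀ Q R : Set A, finNE Q → finNE R → Θ Q R →
        CTheta Θ Q ⊆ CTheta Θ R := by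
      intro Q R hQ hR h a ha
      have h1 : Θ (Q ∪ {a}) Q := CTheta_key hrefl hunion hQ ha
      have h2 : Θ (R ∪ {a}) (Q ∪ {a}) :=
        hunion R {a} Q {a} hR (finNE_singleton a) hQ (finNE_singleton a)
          (hsymm _ _ h) (hrefl _ (finNE_singleton a))
      have h3 : Θ (R ∪ {a}) R := htrans _ _ _ h2 (htrans _ _ _ h1 h)
      exact ⟨R, hR.1, hR.2, subset_rfl, h3⟩
    constructor
    · intro h
      exact ⟨hQ, hR, Set.Subset.antisymm (sub Q R hQ hR h)
        (sub R Q hR hQ (hsymm _ _ h))⟩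
    · rintro ⟨-, -, hCeq⟩
      have hself : ∀ S : Set A, finNE S → S ⊆ CTheta Θ S := by
        intro S hS a ha
        refine ⟨S, hS.1, hS.2, subset_rfl, ?_⟩
        rw [Set.union_eq_self_of_subset_right (Set.singleton_subset_iff.mpr ha)]
        exact hrefl S hS
      have h1 : Θ (R ∪ Q) R :=
        CTheta_subset hrefl htrans hunion hR hQ.1 hQ.2 (hCeq ▸ hself Q hQ)
      have h2 : Θ (Q ∪ R) Q :=
        CTheta_subset hrefl htrans hunion hQ hR.1 hR.2 (hCeq ▸ hself R hR)
      have h3 : Θ Q (Q ∪ R) := hsymm _ _ h2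
      rw [Set.union_comm] at h3
      exact htrans _ _ _ h3 h1
  · rintro C ⟨hempty, hext, hmono, hidem, halg, -⟩ T
    ext a
    constructor
    · rintro ⟨U, hUf, hUne, hUT, -, -, hCeq⟩
      have : a ∈ C (U ∪ {a}) := hext _ (Or.inr rfl)
      rw [hCeq] at this
      exact hmono U T hUT this
    · intro ha
      rw [halg T] at ha
      simp only [Set.mem_iUnion] at ha
      obtain ⟨F, ⟨hFf, hFT⟩, haF⟩ := ha
      have hFne : F.Nonempty := by
        rcases F.eq_empty_or_nonempty with h | h
        · subst h; rw [hempty] at haF; exact absurd haF (Set.notMem_empty a)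
        · exact h
      refine ⟨F, hFf, hFne, hFT,
        ⟨finNE_union ⟨hFf, hFne⟩ (finNE_singleton a), ⟨hFf, hFne⟩, ?_⟩⟩
      apply Set.Subset.antisymm
      · have : F ∪ {a} ⊆ C F := Set.union_subset (hext F)
          (Set.singleton_subset_iff.mpr haF)
        calc C (F ∪ {a}) ⊆ C (C F) := hmono _ _ this
          _ = C F := hidem F
      · exact hmono _ _ Set.subset_union_left
end

section
/- Let (A, Ω) be an algebra and Θ a fully invariant congruence on the extended power algebra (P^{<ω}_{>0}(A), Ω, ∪). Then for every endomorphism φ of (P^{<ω}_{>0}(A), Ω, ∪), every finite nonempty T ⊆ A, and every r ∈ C_Θ(T), we have φ({r}) ⊆ C_Θ(φ(T)). -/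
/-- `φ` is an endomorphism of the extended power algebra `(P^{<ω}_{>0}(A), Ω, ∪)`. -/
def IsEndo {A : Type*} {ι : Type*} (ar : ι → ℕ) (op : ∀ i, (Fin (ar i) → A) → A)
    (φ : Set A → Set A) : Prop :=
  (∀ X : Set A, finNE X → finNE (φ X)) ∧
  (∀ X Y : Set A, finNE X → finNE Y → φ (X ∪ Y) = φ X ∪ φ Y) ∧
  (∀ i, ∀ X : Fin (ar i) → Set A, (∀ k, finNE (X k)) →
    φ (setOp (op i) X) = setOp (op i) (fun k => φ (X k)))

/-- Lemma 3.7: if `Θ` is a fully invariant congruence on the extended power algebra,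
then for every endomorphism `φ`, finite nonempty `T` and `r ∈ C_Θ(T)`,
`φ({r}) ⊆ C_Θ(φ(T))`. -/
theorem stmt10 {A : Type*} {ι : Type*} (ar : ι → ℕ)
    (op : ∀ i, (Fin (ar i) → A) → A)
    (Θ : Set A → Set A → Prop) (hΘ : PowCong ar op Θ)
    (hfi : ∀ φ : Set A → Set A, IsEndo ar op φ →
      ∀ X Y : Set A, finNE X → finNE Y → Θ X Y → Θ (φ X) (φ Y))
    (φ : Set A → Set A) (hφ : IsEndo ar op φ)
    (T : Set A) (hT : finNE T) (r : A) (hr : r ∈ CTheta Θ T) :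
    φ {r} ⊆ CTheta Θ (φ T) := by
  obtain ⟨refl, symm, trans, unionc, _⟩ := hΘ
  obtain ⟨hfin, hunion, hop⟩ := hφ
  obtain ⟨U, hUf, hUne, hUT, hUr⟩ := hr
  -- step 1: Θ (T ∪ {r}) T
  have hUrNE : finNE (U ∪ {r}) := ⟨hUf.union (Set.finite_singleton r), hUne.inl⟩
  have hUNE : finNE U := ⟨hUf, hUne⟩
  have hTrNE : finNE (T ∪ ({r} : Set A)) := ⟨hT.1.union (Set.finite_singleton r), hT.2.inl⟩
  have h1 : Θ (T ∪ {r}) T := by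
    have := unionc (U ∪ {r}) T U T hUrNE hT hUNE hT hUr (refl T hT)
    have e1 : U ∪ {r} ∪ T = T ∪ {r} := by
      rw [Set.union_right_comm, Set.union_eq_self_of_subset_left hUT]
    have e2 : U ∪ T = T := Set.union_eq_self_of_subset_left hUT
    rwa [e1, e2] at this
  -- step 2: apply φ
  have h2 : Θ (φ T ∪ φ {r}) (φ T) := by
    have := hfi φ ⟨hfin, hunion, hop⟩ (T ∪ {r}) T hTrNE hT h1
    rwa [hunion T {r} hT ⟨Set.finite_singleton r, Set.singleton_nonempty r⟩] at this
  have hφT : finNE (φ T) := hfin T hT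
  have hφr : finNE (φ {r}) := hfin {r} ⟨Set.finite_singleton r, Set.singleton_nonempty r⟩
  intro a ha
  refine ⟨φ T, hφT.1, hφT.2, le_refl _, ?_⟩
  have haNE : finNE (φ T ∪ ({a} : Set A)) :=
    ⟨hφT.1.union (Set.finite_singleton a), hφT.2.inl⟩
  have h3 : Θ (φ T ∪ φ {r}) (φ T ∪ {a}) := by
    have := unionc (φ T ∪ φ {r}) (φ T ∪ {a}) (φ T) (φ T ∪ {a})
      ⟨hφT.1.union hφr.1, hφT.2.inl⟩ haNE hφT haNE h2 (refl _ haNE)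
    have e1 : φ T ∪ φ {r} ∪ (φ T ∪ {a}) = φ T ∪ φ {r} := by
      apply Set.union_eq_self_of_subset_right
      exact Set.union_subset Set.subset_union_left
        (Set.singleton_subset_iff.mpr (Set.mem_union_right _ ha))
    have e2 : φ T ∪ (φ T ∪ {a}) = φ T ∪ {a} := by
      rw [← Set.union_assoc, Set.union_self]
    rwa [e1, e2] at this
  exact trans _ _ _ (symm _ _ h3) h2
end

section
/- Let (A, Ω) be an algebra, Θ a fully invariant congruence on (P^{<ω}_{>0}(A), Ω, ∪), and f an endomorphism of (A, Ω). Then f⁺(C_Θ(T)) ⊆ C_Θ(f⁺(T)) for every finite nonempty subset T of A, where f⁺(S) = {f(s) | s ∈ S}. -/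
/-- Example 3.9: if `Θ` is a fully invariant congruence on the extended power algebra
and `f` is an endomorphism of `(A, Ω)`, then `f⁺(C_Θ(T)) ⊆ C_Θ(f⁺(T))` for every
finite nonempty `T ⊆ A`, where `f⁺(S) = {f(s) | s ∈ S}`. -/
theorem stmt12 {A : Type*} {ι : Type*} (ar : ι → ℕ)
    (op : ∀ i, (Fin (ar i) → A) → A)
    (Θ : Set A → Set A → Prop) (hΘ : PowCong ar op Θ)
    (hfi : ∀ φ : Set A → Set A, IsEndo ar op φ →
      ∀ X Y : Set A, finNE X → finNE Y → Θ X Y → Θ (φ X) (φ Y))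
    (f : A → A) (hf : ∀ i, ∀ x : Fin (ar i) → A, f (op i x) = op i (fun k => f (x k)))
    (T : Set A) (hT : finNE T) :
    f '' CTheta Θ T ⊆ CTheta Θ (f '' T) := by
  have hendo : IsEndo ar op (Set.image f) := by
    refine ⟨fun X hX => ⟨hX.1.image f, hX.2.image f⟩,
      fun X Y _ _ => Set.image_union f X Y, fun i X hX => ?_⟩
    ext b
    constructor
    · rintro ⟨c, ⟨x, hx, rfl⟩, rfl⟩
      exact ⟨fun k => f (x k), fun k => ⟨x k, hx k, rfl⟩, (hf i x).symm⟩
    · rintro ⟨y, hy, rfl⟩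
      choose x hx hfx using hy
      exact ⟨op i x, ⟨x, hx, rfl⟩, by rw [hf i x]; simp [hfx]⟩
  rintro b ⟨a, ⟨U, hUf, hUne, hUT, hΘU⟩, rfl⟩
  refine ⟨f '' U, hUf.image f, hUne.image f, Set.image_mono hUT, ?_⟩
  have h := hfi (Set.image f) hendo (U ∪ {a}) U
    ⟨hUf.union (Set.finite_singleton a), hUne.mono Set.subset_union_left⟩
    ⟨hUf, hUne⟩ hΘU
  simpa [Set.image_union, Set.image_insert_eq] using h
end
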